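/- The rewrite system σ on the terms of L' is strongly normalizing: there is no infinite sequence of σ-rewriting steps. -/

import Mathlib

/- ## Binding logic: syntax and sequent calculus -/

/-- A binding-logic language: function and predicate symbols with binding arities. -/
structure BSig where
  Fn : Type
  Pr : Type
  /-- binding arity of a function symbol -/
  far : Fn → List ℕ
  /-- binding arity of a predicate symbol -/
  par : Pr → List ℕ

/-- Terms of binding logic (α-equivalence classes, in locally nameless / de Bruijn style):
`bvar i` is a variable bound by a binder of a function symbol or by a quantifier,
`fvar x` is a named free variable.  In `app f a`, the `i`-th argument `a i` is a term
in which `(S.far f).get i` additional variables (de Bruijn indices `0, …, kᵢ - 1`) are bound. -/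
inductive Tm (S : BSig) : Type
  | bvar : ℕ → Tm S
  | fvar : ℕ → Tm S
  | app : (f : S.Fn) → (Fin (S.far f).length → Tm S) → Tm S

variable {S : BSig}

/-- `Tm.WF p t`: all de Bruijn variables of `t` are bound among the `p` ambient binders;
a *term of the language* (over named free variables) at binder depth `p`. -/
def Tm.WF : ℕ → Tm S → Prop
  | p, .bvar i => i < p
  | _, .fvar _ => True
  | p, .app f a => ∀ i, Tm.WF (p + (S.far f).get i) (a i)

/-- Capture-avoiding substitution of the term `u` for the free variable `x`. -/
def Tm.subst (x : ℕ) (u : Tm S) : Tm S → Tm S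
  | .bvar i => .bvar i
  | .fvar y => if y = x then u else .fvar y
  | .app f a => .app f (fun i => Tm.subst x u (a i))

/-- Instantiation of the bound variable `k` by the (locally closed) term `u`. -/
def Tm.openT (u : Tm S) : ℕ → Tm S → Tm S
  | k, .bvar i => if i = k then u else .bvar i
  | _, .fvar y => .fvar y
  | k, .app f a => .app f (fun i => Tm.openT u (k + (S.far f).get i) (a i))

/-- Free (named) variables of a term. -/
def Tm.fv : Tm S → Set ℕ
  | .bvar _ => ∅
  | .fvar x => {x}
  | .app _ a => ⋃ i, (a i).fv

/-- Propositions of binding logic.  In `atom P a`, the `i`-th argument binds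
`(S.par P).get i` variables; quantifiers bind one de Bruijn variable. -/
inductive Fm (S : BSig) : Type
  | atom : (P : S.Pr) → (Fin (S.par P).length → Tm S) → Fm S
  | imp : Fm S → Fm S → Fm S
  | conj : Fm S → Fm S → Fm S
  | disj : Fm S → Fm S → Fm S
  | bot : Fm S
  | all : Fm S → Fm S
  | ex : Fm S → Fm S

/-- `Fm.WF q A`: well-formedness of `A` under `q` ambient quantifiers. -/
def Fm.WF : ℕ → Fm S → Prop
  | q, .atom P a => ∀ i, Tm.WF (q + (S.par P).get i) (a i)
  | q, .imp A B => Fm.WF q A ∧ Fm.WF q B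
  | q, .conj A B => Fm.WF q A ∧ Fm.WF q B
  | q, .disj A B => Fm.WF q A ∧ Fm.WF q B
  | _, .bot => True
  | q, .all A => Fm.WF (q + 1) A
  | q, .ex A => Fm.WF (q + 1) A

/-- Free (named) variables of a proposition. -/
def Fm.fv : Fm S → Set ℕ
  | .atom _ a => ⋃ i, (a i).fv
  | .imp A B => A.fv ∪ B.fv
  | .conj A B => A.fv ∪ B.fv
  | .disj A B => A.fv ∪ B.fv
  | .bot => ∅
  | .all A => A.fv
  | .ex A => A.fv

/-- Instantiation of the quantifier-bound variable `k` of a proposition by a term. -/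
def Fm.openF (u : Tm S) : ℕ → Fm S → Fm S
  | k, .atom P a => .atom P (fun i => Tm.openT u (k + (S.par P).get i) (a i))
  | k, .imp A B => .imp (Fm.openF u k A) (Fm.openF u k B)
  | k, .conj A B => .conj (Fm.openF u k A) (Fm.openF u k B)
  | k, .disj A B => .disj (Fm.openF u k A) (Fm.openF u k B)
  | _, .bot => .bot
  | k, .all A => .all (Fm.openF u (k + 1) A)
  | k, .ex A => .ex (Fm.openF u (k + 1) A)

/-- Capture-avoiding substitution of a term for a free variable in a proposition. -/
def Fm.subst (x : ℕ) (u : Tm S) : Fm S → Fm S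
  | .atom P a => .atom P (fun i => Tm.subst x u (a i))
  | .imp A B => .imp (Fm.subst x u A) (Fm.subst x u B)
  | .conj A B => .conj (Fm.subst x u A) (Fm.subst x u B)
  | .disj A B => .disj (Fm.subst x u A) (Fm.subst x u B)
  | .bot => .bot
  | .all A => .all (Fm.subst x u A)
  | .ex A => .ex (Fm.subst x u A)

/-- Free variables of a multiset of propositions. -/
def mFv (Γ : Multiset (Fm S)) : Set ℕ := {x | ∃ A ∈ Γ, x ∈ A.fv}

/-- The sequent calculus of binding logic: exactly the standard rules of classical
sequent calculus, with capture-avoiding substitution in the quantifier rules. -/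
inductive Deriv (S : BSig) : Multiset (Fm S) → Multiset (Fm S) → Prop
  | ax (A : Fm S) : Deriv S {A} {A}
  | cut {Γ Δ : Multiset (Fm S)} {A : Fm S} :
      Deriv S (A ::ₘ Γ) Δ → Deriv S Γ (A ::ₘ Δ) → Deriv S Γ Δ
  | contrL {Γ Δ} {A : Fm S} : Deriv S (A ::ₘ A ::ₘ Γ) Δ → Deriv S (A ::ₘ Γ) Δ
  | contrR {Γ Δ} {A : Fm S} : Deriv S Γ (A ::ₘ A ::ₘ Δ) → Deriv S Γ (A ::ₘ Δ)
  | weakL {Γ Δ} {A : Fm S} : Deriv S Γ Δ → Deriv S (A ::ₘ Γ) Δ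
  | weakR {Γ Δ} {A : Fm S} : Deriv S Γ Δ → Deriv S Γ (A ::ₘ Δ)
  | impL {Γ Δ} {A B : Fm S} :
      Deriv S Γ (A ::ₘ Δ) → Deriv S (B ::ₘ Γ) Δ → Deriv S ((Fm.imp A B) ::ₘ Γ) Δ
  | impR {Γ Δ} {A B : Fm S} :
      Deriv S (A ::ₘ Γ) (B ::ₘ Δ) → Deriv S Γ ((Fm.imp A B) ::ₘ Δ)
  | conjL {Γ Δ} {A B : Fm S} :
      Deriv S (A ::ₘ B ::ₘ Γ) Δ → Deriv S ((Fm.conj A B) ::ₘ Γ) Δ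
  | conjR {Γ Δ} {A B : Fm S} :
      Deriv S Γ (A ::ₘ Δ) → Deriv S Γ (B ::ₘ Δ) → Deriv S Γ ((Fm.conj A B) ::ₘ Δ)
  | disjL {Γ Δ} {A B : Fm S} :
      Deriv S (A ::ₘ Γ) Δ → Deriv S (B ::ₘ Γ) Δ → Deriv S ((Fm.disj A B) ::ₘ Γ) Δ
  | disjR {Γ Δ} {A B : Fm S} :
      Deriv S Γ (A ::ₘ B ::ₘ Δ) → Deriv S Γ ((Fm.disj A B) ::ₘ Δ)
  | botL {Γ Δ} : Deriv S ((Fm.bot) ::ₘ Γ) Δ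
  | allL {Γ Δ} {A : Fm S} {t : Tm S} : Tm.WF 0 t →
      Deriv S ((Fm.openF t 0 A) ::ₘ Γ) Δ → Deriv S ((Fm.all A) ::ₘ Γ) Δ
  | allR {Γ Δ} {A : Fm S} {x : ℕ} :
      x ∉ mFv Γ → x ∉ mFv Δ → x ∉ A.fv →
      Deriv S Γ ((Fm.openF (Tm.fvar x) 0 A) ::ₘ Δ) → Deriv S Γ ((Fm.all A) ::ₘ Δ)
  | exL {Γ Δ} {A : Fm S} {x : ℕ} :
      x ∉ mFv Γ → x ∉ mFv Δ → x ∉ A.fv →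
      Deriv S ((Fm.openF (Tm.fvar x) 0 A) ::ₘ Γ) Δ → Deriv S ((Fm.ex A) ::ₘ Γ) Δ
  | exR {Γ Δ} {A : Fm S} {t : Tm S} : Tm.WF 0 t →
      Deriv S Γ ((Fm.openF t 0 A) ::ₘ Δ) → Deriv S Γ ((Fm.ex A) ::ₘ Δ)
/- ## The translated language L' : explicit substitutions and de Bruijn indices -/

/-- Sorts of `L'`: `tm n` for terms in a context of `n` bound variables, and
`sb n p` for explicit substitutions mapping `p` variables to terms of sort `n`. -/
inductive Srt : Type
  | tm : ℕ → Srt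
  | sb : ℕ → ℕ → Srt
deriving DecidableEq

/-- Terms of `L'`.  `evar x s` is a named variable of sort `s`; `qvar i` is a
(formula-level) de Bruijn variable bound by a quantifier; `idx i n` is the de Bruijn
constant `iₙ` (`1 ≤ i ≤ n`); `fa f p a` is `fₚ(a)`; `sub t s` is `t[s]`;
`eid n`, `cons`, `up n`, `comp` are `idₙ`, cons `.`, `↑ₙ` and composition `∘`. -/
inductive ETm (S : BSig) : Type
  | evar : ℕ → Srt → ETm S
  | qvar : ℕ → ETm S
  | idx : ℕ → ℕ → ETm S
  | fa : (f : S.Fn) → ℕ → (Fin (S.far f).length → ETm S) → ETm S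
  | sub : ETm S → ETm S → ETm S
  | eid : ℕ → ETm S
  | cons : ETm S → ETm S → ETm S
  | up : ℕ → ETm S
  | comp : ETm S → ETm S → ETm S

variable {S : BSig}

/-- The iterated shift `↑^k` out of context `p`:
`↑_p ∘ (↑_{p+1} ∘ ⋯ ∘ ↑_{p+k-1})`, of sort `⟨p+k, p⟩` (`id_p` for `k = 0`). -/
def upChain (S : BSig) (p : ℕ) : ℕ → ETm S
  | 0 => .eid p
  | 1 => .up p
  | k + 2 => .comp (.up p) (upChain S (p + 1) (k + 1))

/-- Sorting judgment for `L'`; `Θ` gives the sorts of the quantifier-bound variables. -/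
inductive HasSort : List Srt → ETm S → Srt → Prop
  | evar {Θ x s} : HasSort Θ (.evar x s) s
  | qvar {Θ i s} : Θ[i]? = some s → HasSort Θ (.qvar i) s
  | idx {Θ i n} : 1 ≤ i → i ≤ n → HasSort Θ (.idx i n) (.tm n)
  | fa {Θ} {f : S.Fn} {p : ℕ} {a : Fin (S.far f).length → ETm S} :
      (∀ j, HasSort Θ (a j) (.tm (p + (S.far f).get j))) →
      HasSort Θ (.fa f p a) (.tm p)
  | sub {Θ t s n p} : HasSort Θ t (.tm p) → HasSort Θ s (.sb n p) →
      HasSort Θ (.sub t s) (.tm n)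
  | eid {Θ n} : HasSort Θ (.eid n) (.sb n n)
  | cons {Θ t s n p} : HasSort Θ t (.tm n) → HasSort Θ s (.sb n p) →
      HasSort Θ (.cons t s) (.sb n (p + 1))
  | up {Θ n} : HasSort Θ (.up n) (.sb (n + 1) n)
  | comp {Θ s₁ s₂ n p q} : HasSort Θ s₁ (.sb p n) → HasSort Θ s₂ (.sb q p) →
      HasSort Θ (.comp s₁ s₂) (.sb q n)

/-- The component `1[↑^j]` (of sort `q+k`, with `1` of sort `q+k-j`). -/
def shiftOne (S : BSig) (q k j : ℕ) : ETm S :=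
  if j = 0 then .idx 1 (q + k) else .sub (.idx 1 (q + k - j)) (upChain S (q + k - j) j)

/-- Auxiliary: builds `1[↑^j]. … .1[↑^{k-1}].(s ∘ ↑^k)`. -/
def liftAux (S : BSig) (q k : ℕ) (s : ETm S) : ℕ → ℕ → ETm S
  | 0, _ => .comp s (upChain S q k)
  | m + 1, j => .cons (shiftOne S q k j) (liftAux S q k s m (j + 1))

/-- The substitution `1.1[↑].….1[↑^{k−1}].(s ∘ ↑^k)` of sort `⟨q+k, p+k⟩`,
for `s` of sort `⟨q,p⟩` (just `s` when `k = 0`). -/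
def liftSub (S : BSig) (q k : ℕ) (s : ETm S) : ETm S :=
  match k with
  | 0 => s
  | k' + 1 => liftAux S q (k' + 1) s (k' + 1) 0

/-- One step of `σ`-rewriting (at the root or in any subterm). -/
inductive Rw : ETm S → ETm S → Prop
  -- the rule n+1 → 1[↑ⁿ]
  | ridx {i n : ℕ} : 1 ≤ i → i + 1 ≤ n →
      Rw (.idx (i + 1) n) (.sub (.idx 1 (n - i)) (upChain S (n - i) i))
  -- 1[t.s] → t
  | rhead {m : ℕ} {t s : ETm S} : Rw (.sub (.idx 1 m) (.cons t s)) t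
  -- t[id] → t
  | rtid {n : ℕ} {t : ETm S} : Rw (.sub t (.eid n)) t
  -- (t[s])[s'] → t[s ∘ s']
  | rclos {t s s' : ETm S} : Rw (.sub (.sub t s) s') (.sub t (.comp s s'))
  -- id ∘ s → s
  | ridl {n : ℕ} {s : ETm S} : Rw (.comp (.eid n) s) s
  -- ↑ ∘ (t.s) → s
  | rshcons {n : ℕ} {t s : ETm S} : Rw (.comp (.up n) (.cons t s)) s
  -- (s₁ ∘ s₂) ∘ s₃ → s₁ ∘ (s₂ ∘ s₃)
  | rassoc {s₁ s₂ s₃ : ETm S} : Rw (.comp (.comp s₁ s₂) s₃) (.comp s₁ (.comp s₂ s₃))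
  -- (t.s) ∘ s' → t[s'].(s ∘ s')
  | rmap {t s s' : ETm S} : Rw (.comp (.cons t s) s') (.cons (.sub t s') (.comp s s'))
  -- s ∘ id → s
  | ridr {n : ℕ} {s : ETm S} : Rw (.comp s (.eid n)) s
  -- 1.↑ → id
  | rvarsh {n : ℕ} : Rw (.cons (.idx 1 (n + 1)) (.up n)) (.eid (n + 1))
  -- 1[s].(↑ ∘ s) → s
  | rscons {m n : ℕ} {s : ETm S} : Rw (.cons (.sub (.idx 1 m) s) (.comp (.up n) s)) s
  -- fₚ(t₁,…,tₙ)[s] → f_q(t₁[1.1[↑].….1[↑^{k₁−1}].s∘↑^{k₁}], …) for s of sort ⟨q,p⟩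
  | rfa {f : S.Fn} {p q : ℕ} {a : Fin (S.far f).length → ETm S} {s : ETm S} :
      (∃ Θ, HasSort Θ s (.sb q p)) →
      Rw (.sub (.fa f p a) s)
         (.fa f q (fun i => .sub (a i) (liftSub S q ((S.far f).get i) s)))
  -- congruence: rewriting in subterms
  | cfa {f : S.Fn} {p : ℕ} {a : Fin (S.far f).length → ETm S}
      {i : Fin (S.far f).length} {t' : ETm S} :
      Rw (a i) t' → Rw (.fa f p a) (.fa f p (Function.update a i t'))
  | csub₁ {t t' s : ETm S} : Rw t t' → Rw (.sub t s) (.sub t' s)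
  | csub₂ {t s s' : ETm S} : Rw s s' → Rw (.sub t s) (.sub t s')
  | ccons₁ {t t' s : ETm S} : Rw t t' → Rw (.cons t s) (.cons t' s)
  | ccons₂ {t s s' : ETm S} : Rw s s' → Rw (.cons t s) (.cons t s')
  | ccomp₁ {t t' s : ETm S} : Rw t t' → Rw (.comp t s) (.comp t' s)
  | ccomp₂ {t s s' : ETm S} : Rw s s' → Rw (.comp t s) (.comp t s')

/-- The congruence `≡` on terms of `L'` generated by the rewrite system `σ`. -/
def TmConv (S : BSig) : ETm S → ETm S → Prop := Relation.EqvGen Rw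

/-- A term is `σ`-normal if no rewrite step applies to it. -/
def ENormal (t : ETm S) : Prop := ∀ u, ¬ Rw t u

/-- Propositions of `L'` (quantifiers bind one variable of the indicated sort,
represented by formula-level de Bruijn indices `qvar`). -/
inductive EFm (S : BSig) : Type
  | atom : (P : S.Pr) → (Fin (S.par P).length → ETm S) → EFm S
  | imp : EFm S → EFm S → EFm S
  | conj : EFm S → EFm S → EFm S
  | disj : EFm S → EFm S → EFm S
  | bot : EFm S
  | all : Srt → EFm S → EFm S
  | ex : Srt → EFm S → EFm S

/-- Replacement of the quantifier-bound variable `k` by a term (in a term of `L'`). -/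
def ETm.openE (u : ETm S) (k : ℕ) : ETm S → ETm S
  | .qvar i => if i = k then u else .qvar i
  | .evar x s => .evar x s
  | .idx i n => .idx i n
  | .fa f p a => .fa f p (fun j => ETm.openE u k (a j))
  | .sub t s => .sub (ETm.openE u k t) (ETm.openE u k s)
  | .eid n => .eid n
  | .cons t s => .cons (ETm.openE u k t) (ETm.openE u k s)
  | .up n => .up n
  | .comp t s => .comp (ETm.openE u k t) (ETm.openE u k s)

/-- Instantiation of the quantifier-bound variable `k` of a proposition of `L'`. -/
def EFm.openF (u : ETm S) : ℕ → EFm S → EFm S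
  | k, .atom P a => .atom P (fun i => ETm.openE u k (a i))
  | k, .imp A B => .imp (EFm.openF u k A) (EFm.openF u k B)
  | k, .conj A B => .conj (EFm.openF u k A) (EFm.openF u k B)
  | k, .disj A B => .disj (EFm.openF u k A) (EFm.openF u k B)
  | _, .bot => .bot
  | k, .all s A => .all s (EFm.openF u (k + 1) A)
  | k, .ex s A => .ex s (EFm.openF u (k + 1) A)

/-- Names of the free named variables of a term of `L'`. -/
def ETm.fvs : ETm S → Set ℕ
  | .evar x _ => {x}
  | .qvar _ => ∅
  | .idx _ _ => ∅
  | .fa _ _ a => ⋃ i, (a i).fvs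
  | .sub t s => t.fvs ∪ s.fvs
  | .eid _ => ∅
  | .cons t s => t.fvs ∪ s.fvs
  | .up _ => ∅
  | .comp t s => t.fvs ∪ s.fvs

/-- Names of the free named variables of a proposition of `L'`. -/
def EFm.fvs : EFm S → Set ℕ
  | .atom _ a => ⋃ i, (a i).fvs
  | .imp A B => A.fvs ∪ B.fvs
  | .conj A B => A.fvs ∪ B.fvs
  | .disj A B => A.fvs ∪ B.fvs
  | .bot => ∅
  | .all _ A => A.fvs
  | .ex _ A => A.fvs

/-- Free variables of a multiset of `L'`-propositions. -/
def mFvE (Γ : Multiset (EFm S)) : Set ℕ := {x | ∃ A ∈ Γ, x ∈ A.fvs}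

/-- The congruence on propositions of `L'` generated by `σ`
(congruent atoms have `≡`-congruent arguments). -/
inductive FConv : EFm S → EFm S → Prop
  | atom {P : S.Pr} {a b : Fin (S.par P).length → ETm S} :
      (∀ i, TmConv S (a i) (b i)) → FConv (.atom P a) (.atom P b)
  | imp {A A' B B'} : FConv A A' → FConv B B' → FConv (.imp A B) (.imp A' B')
  | conj {A A' B B'} : FConv A A' → FConv B B' → FConv (.conj A B) (.conj A' B')
  | disj {A A' B B'} : FConv A A' → FConv B B' → FConv (.disj A B) (.disj A' B')
  | bot : FConv .bot .bot
  | all {s A A'} : FConv A A' → FConv (.all s A) (.all s A')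
  | ex {s A A'} : FConv A A' → FConv (.ex s A) (.ex s A')

/-- Sequent calculus modulo a congruence `E`, with proof length recorded:
the standard classical rules, where principal formulas need only be congruent
to the displayed shape.  `DerivM E n Γ Δ` : `Γ ⊢ Δ` has a proof of length `n`. -/
inductive DerivM (E : EFm S → EFm S → Prop) : ℕ → Multiset (EFm S) → Multiset (EFm S) → Prop
  | ax {A B : EFm S} : E A B → DerivM E 1 {A} {B}
  | cut {m n Γ Δ} {A B : EFm S} : E A B →
      DerivM E m (A ::ₘ Γ) Δ → DerivM E n Γ (B ::ₘ Δ) → DerivM E (m + n + 1) Γ Δ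
  | contrL {m Γ Δ} {A B₁ B₂ : EFm S} : E A B₁ → E A B₂ →
      DerivM E m (B₁ ::ₘ B₂ ::ₘ Γ) Δ → DerivM E (m + 1) (A ::ₘ Γ) Δ
  | contrR {m Γ Δ} {A B₁ B₂ : EFm S} : E A B₁ → E A B₂ →
      DerivM E m Γ (B₁ ::ₘ B₂ ::ₘ Δ) → DerivM E (m + 1) Γ (A ::ₘ Δ)
  | weakL {m Γ Δ} {A : EFm S} : DerivM E m Γ Δ → DerivM E (m + 1) (A ::ₘ Γ) Δ
  | weakR {m Γ Δ} {A : EFm S} : DerivM E m Γ Δ → DerivM E (m + 1) Γ (A ::ₘ Δ)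
  | impL {m n Γ Δ} {C A B : EFm S} : E C (.imp A B) →
      DerivM E m Γ (A ::ₘ Δ) → DerivM E n (B ::ₘ Γ) Δ → DerivM E (m + n + 1) (C ::ₘ Γ) Δ
  | impR {m Γ Δ} {C A B : EFm S} : E C (.imp A B) →
      DerivM E m (A ::ₘ Γ) (B ::ₘ Δ) → DerivM E (m + 1) Γ (C ::ₘ Δ)
  | conjL {m Γ Δ} {C A B : EFm S} : E C (.conj A B) →
      DerivM E m (A ::ₘ B ::ₘ Γ) Δ → DerivM E (m + 1) (C ::ₘ Γ) Δ
  | conjR {m n Γ Δ} {C A B : EFm S} : E C (.conj A B) →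
      DerivM E m Γ (A ::ₘ Δ) → DerivM E n Γ (B ::ₘ Δ) → DerivM E (m + n + 1) Γ (C ::ₘ Δ)
  | disjL {m n Γ Δ} {C A B : EFm S} : E C (.disj A B) →
      DerivM E m (A ::ₘ Γ) Δ → DerivM E n (B ::ₘ Γ) Δ → DerivM E (m + n + 1) (C ::ₘ Γ) Δ
  | disjR {m Γ Δ} {C A B : EFm S} : E C (.disj A B) →
      DerivM E m Γ (A ::ₘ B ::ₘ Δ) → DerivM E (m + 1) Γ (C ::ₘ Δ)
  | botL {Γ Δ} {A : EFm S} : E A .bot → DerivM E 1 (A ::ₘ Γ) Δ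
  | allL {m Γ Δ} {B C A : EFm S} {s : Srt} {t : ETm S} :
      E B (.all s A) → E C (EFm.openF t 0 A) → HasSort [] t s →
      DerivM E m (C ::ₘ Γ) Δ → DerivM E (m + 1) (B ::ₘ Γ) Δ
  | allR {m Γ Δ} {B A : EFm S} {s : Srt} {x : ℕ} :
      E B (.all s A) → x ∉ mFvE Γ → x ∉ mFvE Δ → x ∉ A.fvs →
      DerivM E m Γ ((EFm.openF (.evar x s) 0 A) ::ₘ Δ) → DerivM E (m + 1) Γ (B ::ₘ Δ)
  | exL {m Γ Δ} {B A : EFm S} {s : Srt} {x : ℕ} :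
      E B (.ex s A) → x ∉ mFvE Γ → x ∉ mFvE Δ → x ∉ A.fvs →
      DerivM E m ((EFm.openF (.evar x s) 0 A) ::ₘ Γ) Δ → DerivM E (m + 1) (B ::ₘ Γ) Δ
  | exR {m Γ Δ} {B C A : EFm S} {s : Srt} {t : ETm S} :
      E B (.ex s A) → E C (EFm.openF t 0 A) → HasSort [] t s →
      DerivM E m Γ (C ::ₘ Δ) → DerivM E (m + 1) Γ (B ::ₘ Δ)

/-- Provability in sequent calculus modulo the congruence `E`. -/
def DerivMod (E : EFm S → EFm S → Prop) (Γ Δ : Multiset (EFm S)) : Prop :=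
  ∃ n, DerivM E n Γ Δ

/- ## Pre-cooking : the translation from L to L' -/

/-- Pre-cooking of a term at binder depth `p` (the length of the list `l` of
bound variables): binder-bound variables become de Bruijn constants, other
variables are protected by the shift `↑^p`. -/
def Ft (S : BSig) : (p : ℕ) → Tm S → ETm S
  | p, .bvar i =>
      if i < p then .idx (i + 1) p
      else if p = 0 then .qvar (i - p) else .sub (.qvar (i - p)) (upChain S 0 p)
  | p, .fvar x =>
      if p = 0 then .evar x (.tm 0) else .sub (.evar x (.tm 0)) (upChain S 0 p)
  | p, .app f a => .fa f p (fun i => Ft S (p + (S.far f).get i) (a i))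

/-- Pre-cooking of a proposition: `A' = F(A, ε)`. -/
def Ff (S : BSig) : Fm S → EFm S
  | .atom P a => .atom P (fun i => Ft S ((S.par P).get i) (a i))
  | .imp A B => .imp (Ff S A) (Ff S B)
  | .conj A B => .conj (Ff S A) (Ff S B)
  | .disj A B => .disj (Ff S A) (Ff S B)
  | .bot => .bot
  | .all A => .all (.tm 0) (Ff S A)
  | .ex A => .ex (.tm 0) (Ff S A)

/-- Grafting `⟨v/x⟩t` in `L'`: textual replacement of the (sort-0) variable `x` by `v`. -/
def ETm.graft (x : ℕ) (v : ETm S) : ETm S → ETm S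
  | .evar y s => if y = x ∧ s = .tm 0 then v else .evar y s
  | .qvar i => .qvar i
  | .idx i n => .idx i n
  | .fa f p a => .fa f p (fun j => ETm.graft x v (a j))
  | .sub t s => .sub (ETm.graft x v t) (ETm.graft x v s)
  | .eid n => .eid n
  | .cons t s => .cons (ETm.graft x v t) (ETm.graft x v s)
  | .up n => .up n
  | .comp t s => .comp (ETm.graft x v t) (ETm.graft x v s)

/-- Substitution `(v/x)A` of a (quantifier-closed) term for a variable in a
proposition of `L'` (capture-avoiding, since terms of `L'` have no binders). -/
def EFm.graft (x : ℕ) (v : ETm S) : EFm S → EFm S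
  | .atom P a => .atom P (fun i => ETm.graft x v (a i))
  | .imp A B => .imp (EFm.graft x v A) (EFm.graft x v B)
  | .conj A B => .conj (EFm.graft x v A) (EFm.graft x v B)
  | .disj A B => .disj (EFm.graft x v A) (EFm.graft x v B)
  | .bot => .bot
  | .all s A => .all s (EFm.graft x v A)
  | .ex s A => .ex s (EFm.graft x v A)

/- ## F-terms and F-propositions -/

/-- All named variables occurring in the term have sort `0`. -/
def ETm.vars0 : ETm S → Prop
  | .evar _ s => s = .tm 0
  | .qvar _ => True
  | .idx _ _ => True
  | .fa _ _ a => ∀ i, (a i).vars0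
  | .sub t s => t.vars0 ∧ s.vars0
  | .eid _ => True
  | .cons t s => t.vars0 ∧ s.vars0
  | .up _ => True
  | .comp t s => t.vars0 ∧ s.vars0

/-- All named variables of the proposition have sort `0`, and all its
quantifiers bind variables of sort `0`. -/
def EFm.vars0F : EFm S → Prop
  | .atom _ a => ∀ i, (a i).vars0
  | .imp A B => A.vars0F ∧ B.vars0F
  | .conj A B => A.vars0F ∧ B.vars0F
  | .disj A B => A.vars0F ∧ B.vars0F
  | .bot => True
  | .all s A => s = .tm 0 ∧ A.vars0F
  | .ex s A => s = .tm 0 ∧ A.vars0F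

/-- The proposition is `σ`-normal: every term occurring in it is `σ`-normal. -/
def EFm.TmsNormal : EFm S → Prop
  | .atom _ a => ∀ i, ENormal (a i)
  | .imp A B => A.TmsNormal ∧ B.TmsNormal
  | .conj A B => A.TmsNormal ∧ B.TmsNormal
  | .disj A B => A.TmsNormal ∧ B.TmsNormal
  | .bot => True
  | .all _ A => A.TmsNormal
  | .ex _ A => A.TmsNormal

/-- Well-sortedness of a proposition of `L'` in a context `Θ` of quantified sorts. -/
def EFmSorted : List Srt → EFm S → Prop
  | Θ, .atom P a => ∀ i, HasSort Θ (a i) (.tm ((S.par P).get i))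
  | Θ, .imp A B => EFmSorted Θ A ∧ EFmSorted Θ B
  | Θ, .conj A B => EFmSorted Θ A ∧ EFmSorted Θ B
  | Θ, .disj A B => EFmSorted Θ A ∧ EFmSorted Θ B
  | _, .bot => True
  | Θ, .all s A => EFmSorted (s :: Θ) A
  | Θ, .ex s A => EFmSorted (s :: Θ) A

/-- An F-proposition: a `σ`-normal, well-sorted proposition of `L'` containing
only variables of sort `0`. -/
def FProp (A : EFm S) : Prop := A.TmsNormal ∧ A.vars0F ∧ EFmSorted [] A

/-- An F-term of sort `0`: a `σ`-normal, well-sorted term of sort `0` of `L'`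
containing only variables of sort `0`. -/
def FTerm0 (t : ETm S) : Prop := ENormal t ∧ t.vars0 ∧ HasSort [] t (.tm 0)

/-!
The weight `w` with `w (t[s]) = w (t ∘ s) = w t * w s`, `w (t.s) = max (w t) (w s)`,
`w (fₚ(a)) = 1 + ∑ (w aᵢ + 1)` and `w = 1` on constants never increases along a σ-step.
One shows that `t[s]` and `t ∘ s` are strongly normalizing whenever `t` and `s` are, by
induction on the bound `w t * w s`, then on `t` for reduction-or-immediate-subterm (well
founded on strongly normalizing terms, because a step inside a subterm lifts to the whole
term), then on `s` for reduction. Every reduct of `t[s]` or `t ∘ s` is built from pairs that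
are smaller in this order, except for `s ∘ ↑^k` created by the rule for `fₚ(a)[s]`: its weight
`w s` is strictly below `w (fₚ(a)) * w s`, so the outer induction covers it. Structural
induction then shows that every term is strongly normalizing.
-/
theorem Acc.or_of_commute {α : Type*} {r s : α → α → Prop} (hs : WellFounded s)
    (hcomm : ∀ {a b c}, s a b → r c a → ∃ d, r d b ∧ s c d) {b : α} (hb : Acc r b) :
    Acc (fun x y => r x y ∨ s x y) b := by
  have lift : ∀ {a b c}, Relation.ReflTransGen s a b → r c a →
      ∃ d, r d b ∧ Relation.ReflTransGen s c d := by
    intro a b c hab hca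
    induction hab with
    | refl => exact ⟨c, hca, .refl⟩
    | tail _ hxy ih =>
      obtain ⟨d, hdx, hcd⟩ := ih
      obtain ⟨e, hey, hde⟩ := hcomm hxy hdx
      exact ⟨e, hey, hcd.tail hde⟩
  suffices ∀ a, Relation.ReflTransGen s a b → Acc (fun x y => r x y ∨ s x y) a from
    this b .refl
  induction hb with
  | intro b _ ihb =>
    intro a
    induction a using hs.induction with
    | _ a iha =>
      intro hab
      refine ⟨a, fun c hc => hc.elim (fun hca => ?_) fun hca => iha c hca (.head hca hab)⟩
      obtain ⟨d, hdb, hcd⟩ := lift hab hca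
      exact ihb d hdb c hcd

namespace ETm

def SN (t : ETm S) : Prop := Acc (flip Rw) t

theorem sn_of_normal {t : ETm S} (h : ENormal t) : t.SN :=
  ⟨t, fun u hu => absurd hu (h u)⟩

theorem SN.of_rw {t u : ETm S} (ht : t.SN) (h : Rw t u) : u.SN :=
  ht.inv h

def size : ETm S → ℕ
  | .evar _ _ => 1
  | .qvar _ => 1
  | .idx _ _ => 1
  | .fa _ _ a => 1 + ∑ i, size (a i)
  | .sub t s => 1 + size t + size s
  | .eid _ => 1
  | .cons t s => 1 + size t + size s
  | .up _ => 1
  | .comp t s => 1 + size t + size s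

inductive ImmSubterm : ETm S → ETm S → Prop
  | sub₁ {t s} : ImmSubterm t (.sub t s)
  | sub₂ {t s} : ImmSubterm s (.sub t s)
  | cons₁ {t s} : ImmSubterm t (.cons t s)
  | cons₂ {t s} : ImmSubterm s (.cons t s)
  | comp₁ {t s} : ImmSubterm t (.comp t s)
  | comp₂ {t s} : ImmSubterm s (.comp t s)
  | fa {f p a} (i) : ImmSubterm (a i) (.fa f p a)

theorem ImmSubterm.size_lt {u t : ETm S} (h : ImmSubterm u t) : u.size < t.size := by
  cases h with
  | @fa _ _ a i =>
    have := Finset.single_le_sum (f := fun j => (a j).size) (fun _ _ => Nat.zero_le _)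
      (Finset.mem_univ i)
    simp only [size]
    omega
  | _ => simp only [size]; omega

theorem wellFounded_immSubterm : WellFounded (@ImmSubterm S) :=
  Subrelation.wf ImmSubterm.size_lt (measure size).wf

theorem ImmSubterm.exists_rw {u t u' : ETm S} (h : ImmSubterm u t) (hr : Rw u u') :
    ∃ t', Rw t t' ∧ ImmSubterm u' t' := by
  cases h with
  | sub₁ => exact ⟨_, .csub₁ hr, .sub₁⟩
  | sub₂ => exact ⟨_, .csub₂ hr, .sub₂⟩
  | cons₁ => exact ⟨_, .ccons₁ hr, .cons₁⟩
  | cons₂ => exact ⟨_, .ccons₂ hr, .cons₂⟩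
  | comp₁ => exact ⟨_, .ccomp₁ hr, .comp₁⟩
  | comp₂ => exact ⟨_, .ccomp₂ hr, .comp₂⟩
  | fa i =>
    refine ⟨_, .cfa hr, ?_⟩
    simpa only [Function.update_self] using ImmSubterm.fa (a := Function.update _ i u') i

def ReductOrSubterm (u t : ETm S) : Prop := Rw t u ∨ ImmSubterm u t

theorem SN.acc_reductOrSubterm {t : ETm S} (h : t.SN) : Acc ReductOrSubterm t :=
  h.or_of_commute wellFounded_immSubterm fun hab hca => hab.exists_rw hca

theorem sn_of_acc_reductOrSubterm {t : ETm S} (h : Acc ReductOrSubterm t) : t.SN :=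
  Subrelation.accessible (fun h => Or.inl h) h

theorem SN.of_immSubterm {t u : ETm S} (h : t.SN) (hu : ImmSubterm u t) : u.SN :=
  sn_of_acc_reductOrSubterm (h.acc_reductOrSubterm.inv (Or.inr hu))

theorem upChain_ne_eid {p k n : ℕ} (hk : k ≠ 0) : upChain S p k ≠ .eid n := by
  match k, hk with
  | 1, _ => simp [upChain]
  | k + 2, _ => simp [upChain]

theorem upChain_ne_cons {p k : ℕ} {a b : ETm S} : upChain S p k ≠ .cons a b := by
  match k with
  | 0 => simp [upChain]
  | 1 => simp [upChain]
  | k + 2 => simp [upChain]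

theorem normal_comp_up {p : ℕ} {r : ETm S} (hr : ENormal r)
    (hcons : ∀ t s, r ≠ .cons t s) (heid : ∀ n, r ≠ .eid n) :
    ENormal (.comp (.up p) r) := by
  intro u h
  cases h with
  | rshcons => exact hcons _ _ rfl
  | ridr => exact heid _ rfl
  | ccomp₁ h => exact nomatch h
  | ccomp₂ h => exact hr _ h

theorem normal_sub_idx_one {m : ℕ} {r : ETm S} (hr : ENormal r)
    (hcons : ∀ t s, r ≠ .cons t s) (heid : ∀ n, r ≠ .eid n) :
    ENormal (.sub (.idx 1 m) r) := by
  intro u h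
  cases h with
  | rhead => exact hcons _ _ rfl
  | rtid => exact heid _ rfl
  | csub₁ h => cases h; omega
  | csub₂ h => exact hr _ h

theorem normal_upChain (p k : ℕ) : ENormal (upChain S p k) := by
  induction k using Nat.strong_induction_on generalizing p with
  | _ k ih =>
    match k with
    | 0 => exact fun _ h => nomatch h
    | 1 => exact fun _ h => nomatch h
    | k + 2 =>
      exact normal_comp_up (ih (k + 1) (by omega) (p + 1)) (fun _ _ => upChain_ne_cons)
        (fun _ => upChain_ne_eid k.succ_ne_zero)

theorem normal_sub_idx_one_upChain {m k : ℕ} (hk : k ≠ 0) :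
    ENormal (.sub (.idx 1 m) (upChain S m k)) :=
  normal_sub_idx_one (normal_upChain m k) (fun _ _ => upChain_ne_cons)
    (fun _ => upChain_ne_eid hk)

theorem normal_shiftOne {q k j : ℕ} : ENormal (shiftOne S q k j) := by
  unfold shiftOne
  split
  · rintro u ⟨⟩
    omega
  · exact normal_sub_idx_one_upChain ‹_›

def weight : ETm S → ℕ
  | .evar _ _ => 1
  | .qvar _ => 1
  | .idx _ _ => 1
  | .fa _ _ a => 1 + ∑ i, (weight (a i) + 1)
  | .sub t s => weight t * weight s
  | .eid _ => 1
  | .cons t s => max (weight t) (weight s)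
  | .up _ => 1
  | .comp t s => weight t * weight s

theorem weight_pos (t : ETm S) : 0 < t.weight := by
  induction t with
  | sub t s iht ihs => exact Nat.mul_pos iht ihs
  | cons t s iht ihs => exact lt_max_of_lt_left iht
  | comp t s iht ihs => exact Nat.mul_pos iht ihs
  | _ => simp [weight]

theorem weight_arg_lt_fa {f : S.Fn} {p : ℕ} (a : Fin (S.far f).length → ETm S)
    (i : Fin (S.far f).length) :
    (a i).weight < (ETm.fa f p a).weight := by
  have := Finset.single_le_sum (f := fun j => (a j).weight + 1) (fun _ _ => Nat.zero_le _)
    (Finset.mem_univ i)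
  simp only [weight]
  omega

theorem one_lt_weight_fa {f : S.Fn} {p : ℕ} (a : Fin (S.far f).length → ETm S)
    (i : Fin (S.far f).length) :
    1 < (ETm.fa f p a).weight :=
  lt_of_le_of_lt (weight_pos (a i)) (weight_arg_lt_fa a i)

theorem weight_upChain (p k : ℕ) : (upChain S p k).weight = 1 := by
  induction k using Nat.strong_induction_on generalizing p with
  | _ k ih =>
    match k with
    | 0 => rfl
    | 1 => rfl
    | k + 2 => simp [upChain, weight, ih (k + 1) (by omega)]

theorem weight_shiftOne (q k j : ℕ) : (shiftOne S q k j).weight = 1 := by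
  unfold shiftOne
  split <;> simp [weight, weight_upChain]

theorem weight_liftAux_le (q k : ℕ) (s : ETm S) (m j : ℕ) :
    (liftAux S q k s m j).weight ≤ s.weight := by
  induction m generalizing j with
  | zero => simp [liftAux, weight, weight_upChain]
  | succ m ih => simpa [liftAux, weight, weight_shiftOne] using ⟨weight_pos s, ih (j + 1)⟩

theorem weight_liftSub_le (q k : ℕ) (s : ETm S) : (liftSub S q k s).weight ≤ s.weight := by
  cases k with
  | zero => exact le_rfl
  | succ k => exact weight_liftAux_le _ _ _ _ _

theorem weight_le_of_rw {t u : ETm S} (h : Rw t u) : u.weight ≤ t.weight := by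
  induction h with
  | rhead => simp [weight]
  | rshcons => simp [weight]
  | rclos | rassoc => simp [weight, Nat.mul_assoc]
  | rmap => simp only [weight]; exact max_le (by gcongr; simp) (by gcongr; simp)
  | @rfa f p q a s _ =>
    have hs := weight_pos s
    calc 1 + ∑ i, ((a i).weight * (liftSub S q ((S.far f).get i) s).weight + 1)
        ≤ s.weight + ∑ i, ((a i).weight * s.weight + s.weight) := by
          gcongr with i
          · exact hs
          · exact weight_liftSub_le _ _ _
          · exact hs
      _ = (ETm.fa f p a).weight * s.weight := by
          simp only [weight, add_mul, one_mul, Finset.sum_mul]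
  | @cfa f p a i t' _ ih =>
    simp only [weight]
    gcongr with j
    by_cases hj : j = i
    · subst hj; simpa using ih
    · simp [Function.update_of_ne hj]
  | csub₁ _ ih | csub₂ _ ih | ccons₁ _ ih | ccons₂ _ ih | ccomp₁ _ ih | ccomp₂ _ ih =>
    simp only [weight]; gcongr
  | _ => simp [weight, weight_upChain]

theorem SN.cons {t s : ETm S} (ht : t.SN) (hs : s.SN) : (ETm.cons t s).SN := by
  induction ht generalizing s with
  | intro t ht iht =>
    induction hs with
    | intro s hs ihs =>
      constructor
      intro u h
      cases h with
      | rvarsh => exact sn_of_normal fun _ h => nomatch h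
      | rscons => exact SN.of_immSubterm ⟨_, ht⟩ .sub₂
      | ccons₁ h => exact iht _ h ⟨s, hs⟩
      | ccons₂ h => exact ihs _ h

theorem wellFounded_flip_rw_subtype :
    WellFounded (fun a b : {t : ETm S // t.SN} => Rw b.1 a.1) :=
  ⟨fun ⟨t, ht⟩ => by
    induction ht with
    | intro t _ ih => exact ⟨_, fun ⟨u, _⟩ h => ih u h⟩⟩

theorem SN.fa {f : S.Fn} {p : ℕ} {a : Fin (S.far f).length → ETm S} (ha : ∀ i, (a i).SN) :
    (ETm.fa f p a).SN := by
  suffices ∀ b : Fin (S.far f).length → {t : ETm S // t.SN}, (ETm.fa f p (Subtype.val ∘ b)).SN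
    from this fun i => ⟨a i, ha i⟩
  have hwf := Pi.Lex.wellFounded (fun i j : Fin (S.far f).length => i < j)
    fun _ => wellFounded_flip_rw_subtype (S := S)
  intro b
  induction b using hwf.induction with
  | _ b ih =>
    constructor
    intro u h
    cases h with
    | @cfa _ _ _ i t' h =>
      have hlex : Pi.Lex (· < ·) (fun {_} a b => Rw b.1 a.1)
          (Function.update b i ⟨t', (b i).2.of_rw h⟩) b :=
        ⟨i, fun j hj => Function.update_of_ne hj.ne _ _, by simpa using h⟩
      have := ih _ hlex
      rwa [Function.comp_update] at this

theorem SN.liftSub {q k : ℕ} {s : ETm S} (hs : s.SN) (hcomp : (ETm.comp s (upChain S q k)).SN) :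
    (liftSub S q k s).SN := by
  cases k with
  | zero => exact hs
  | succ k =>
    suffices ∀ m j, (liftAux S q (k + 1) s m j).SN from this _ _
    intro m
    induction m with
    | zero => exact fun _ => hcomp
    | succ m ih => exact fun j => (sn_of_normal normal_shiftOne).cons (ih (j + 1))

def SubCompSN (t s : ETm S) : Prop := (ETm.sub t s).SN ∧ (ETm.comp t s).SN

theorem sn_sub_of_smaller {N : ℕ} {t s : ETm S}
    (hN : ∀ t s : ETm S, t.SN → s.SN → t.weight * s.weight < N → SubCompSN t s)
    (ht : ∀ t', ReductOrSubterm t' t → ∀ s : ETm S, s.SN → t'.weight * s.weight ≤ N →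
      SubCompSN t' s)
    (hs : ∀ s', Rw s s' → t.weight * s'.weight ≤ N → SubCompSN t s')
    (htSN : t.SN) (hsSN : s.SN) (hts : t.weight * s.weight ≤ N) : (ETm.sub t s).SN := by
  constructor
  intro u h
  cases h with
  | rhead => exact hsSN.of_immSubterm .cons₁
  | rtid => exact htSN
  | @rclos t₀ s₀ =>
    have hs₀ : SubCompSN s₀ s := ht s₀ (Or.inr .sub₂) s hsSN <|
      le_trans (Nat.mul_le_mul_right _ (Nat.le_mul_of_pos_left _ (weight_pos t₀))) hts
    exact (ht t₀ (Or.inr .sub₁) _ hs₀.2 (by simpa [weight, Nat.mul_assoc] using hts)).1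
  | @rfa f p q a _ _ =>
    refine SN.fa fun i => (ht (a i) (Or.inr (.fa i)) _ (hsSN.liftSub ?_) ?_).1
    · refine (hN s _ hsSN (sn_of_normal (normal_upChain _ _)) ?_).2
      rw [weight_upChain, mul_one]
      exact lt_of_lt_of_le (lt_mul_of_one_lt_left (weight_pos s) (one_lt_weight_fa a i)) hts
    · exact le_trans (Nat.mul_le_mul (weight_arg_lt_fa a i).le (weight_liftSub_le _ _ _)) hts
  | csub₁ h => exact (ht _ (Or.inl h) s hsSN
      (le_trans (Nat.mul_le_mul_right _ (weight_le_of_rw h)) hts)).1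
  | csub₂ h => exact (hs _ h (le_trans (Nat.mul_le_mul_left _ (weight_le_of_rw h)) hts)).1

theorem sn_comp_of_smaller {N : ℕ} {t s : ETm S}
    (ht : ∀ t', ReductOrSubterm t' t → ∀ s : ETm S, s.SN → t'.weight * s.weight ≤ N →
      SubCompSN t' s)
    (hs : ∀ s', Rw s s' → t.weight * s'.weight ≤ N → SubCompSN t s')
    (htSN : t.SN) (hsSN : s.SN) (hts : t.weight * s.weight ≤ N) : (ETm.comp t s).SN := by
  constructor
  intro u h
  cases h with
  | ridl => exact hsSN
  | rshcons => exact hsSN.of_immSubterm .cons₂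
  | @rassoc s₁ s₂ =>
    have hs₂ : SubCompSN s₂ s := ht s₂ (Or.inr .comp₂) s hsSN <|
      le_trans (Nat.mul_le_mul_right _ (Nat.le_mul_of_pos_left _ (weight_pos s₁))) hts
    exact (ht s₁ (Or.inr .comp₁) _ hs₂.2 (by simpa [weight, Nat.mul_assoc] using hts)).2
  | @rmap t₀ s₀ =>
    have hle (u : ETm S) (hu : u.weight ≤ (ETm.cons t₀ s₀).weight) :
        u.weight * s.weight ≤ N :=
      le_trans (Nat.mul_le_mul_right _ hu) hts
    exact (ht t₀ (Or.inr .cons₁) s hsSN (hle _ (le_max_left _ _))).1.cons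
      (ht s₀ (Or.inr .cons₂) s hsSN (hle _ (le_max_right _ _))).2
  | ridr => exact htSN
  | ccomp₁ h => exact (ht _ (Or.inl h) s hsSN
      (le_trans (Nat.mul_le_mul_right _ (weight_le_of_rw h)) hts)).2
  | ccomp₂ h => exact (hs _ h (le_trans (Nat.mul_le_mul_left _ (weight_le_of_rw h)) hts)).2

theorem subCompSN_of_weight_le (N : ℕ) :
    ∀ t s : ETm S, t.SN → s.SN → t.weight * s.weight ≤ N → SubCompSN t s := by
  induction N using Nat.strong_induction_on with
  | _ N ihN =>
    have hN (t s : ETm S) (ht : t.SN) (hs : s.SN) (h : t.weight * s.weight < N) :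
        SubCompSN t s := ihN _ h t s ht hs le_rfl
    intro t s ht
    obtain htacc := ht.acc_reductOrSubterm
    clear ht
    induction htacc generalizing s with
    | intro t htred iht =>
      intro hs
      induction hs with
      | intro s hsacc ihs =>
        intro hts
        have htSN : t.SN := sn_of_acc_reductOrSubterm ⟨t, htred⟩
        have hsSN : s.SN := ⟨s, hsacc⟩
        exact ⟨sn_sub_of_smaller hN iht ihs htSN hsSN hts,
          sn_comp_of_smaller iht ihs htSN hsSN hts⟩

theorem sn (t : ETm S) : t.SN := by
  induction t with
  | idx i n =>
    constructor
    rintro _ ⟨⟩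
    exact sn_of_normal (normal_sub_idx_one_upChain (by omega))
  | fa f p a ih => exact SN.fa ih
  | sub t s iht ihs => exact (subCompSN_of_weight_le _ t s iht ihs le_rfl).1
  | cons t s iht ihs => exact iht.cons ihs
  | comp t s iht ihs => exact (subCompSN_of_weight_le _ t s iht ihs le_rfl).2
  | _ => exact sn_of_normal fun _ h => nomatch h

theorem wellFounded_flip_rw : WellFounded (flip (@Rw S)) :=
  ⟨sn⟩

end ETm

/-- **Strong normalization of `σ`**: there is no infinite sequence of
`σ`-rewriting steps on the terms of `L'`. -/
theorem sigma_strongly_normalizing (S : BSig) (f : ℕ → ETm S) :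
    ¬ ∀ n : ℕ, Rw (f n) (f (n + 1)) :=
  fun h => (wellFounded_iff_isEmpty_descending_chain.1
    ETm.wellFounded_flip_rw).elim ⟨f, h⟩
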